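/- Let S be a G-graded ring and M a graded left S-module. Then S(M) := ⊕_{g∈G} (S_g S_{g⁻¹}) M_g is a graded submodule of M; that is, S(M) ∩ M_h = (S_h S_{h⁻¹}) M_h for every h ∈ G. -/

import Mathlib

open Pointwise

section Defs

variable {G : Type} [AddGroup G] [DecidableEq G]
variable {A : Type} [Ring A]
variable {M : Type} [AddCommGroup M] [Module A M]

/-- The additive subgroup of `M` consisting of finite sums of products `a • m`
with `a ∈ S` and `m ∈ N`. -/
def prodSMul (S : AddSubgroup A) (N : AddSubgroup M) : AddSubgroup M where
  __ := S.toAddSubmonoid • N.toAddSubmonoid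
  neg_mem' {x} hx := by
    refine AddSubmonoid.smul_induction_on hx (fun a ha m hm => ?_) (fun x y hx hy => ?_)
    · rw [show -(a • m) = (-a) • m by rw [neg_smul]]
      exact AddSubmonoid.smul_mem_smul (S.neg_mem ha) hm
    · rw [neg_add]
      exact (S.toAddSubmonoid • N.toAddSubmonoid).add_mem hx hy

/-- A (possibly non-unital) ring, here an additive subgroup of `A` closed under
multiplication, is *s-unital* if every element has a left and a right local unit in it. -/
def IsSUnitalSub (I : AddSubgroup A) : Prop :=
  ∀ a ∈ I, ∃ u ∈ I, ∃ v ∈ I, u * a = a ∧ a * v = a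

variable (𝒜 : G → AddSubgroup A)

/-- `S` is symmetrically graded if `S_g S_{g⁻¹} S_g = S_g` for all `g`. -/
def IsSymmetricallyGraded : Prop := ∀ g : G, 𝒜 g * 𝒜 (-g) * 𝒜 g = 𝒜 g

/-- `S` is nearly epsilon-strongly graded if each `S_g` is an s-unital
`(S_g S_{g⁻¹}, S_{g⁻¹} S_g)`-bimodule: for every `s ∈ S_g` there are
`u ∈ S_g S_{g⁻¹}` and `v ∈ S_{g⁻¹} S_g` with `u s = s = s v`. -/
def IsNearlyEpsilonStrong : Prop :=
  ∀ g : G, ∀ s ∈ 𝒜 g, ∃ u ∈ 𝒜 g * 𝒜 (-g), ∃ v ∈ 𝒜 (-g) * 𝒜 g, u * s = s ∧ s * v = s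

end Defs

/-! Each summand `(S_g S_{g⁻¹}) M_g` already lies in `M_g`: for `s ∈ S_g`, `t ∈ S_{g⁻¹}` and
`m ∈ M_g`, associativity gives `(s t) m = s (t m) ∈ M_{g + (-g + g)} = M_g`. A sum of subgroups
`N_g ⊆ M_g` is graded, since the `h`-component of an element of `⨆ N_g` is its summand from `N_h`. -/

section

variable {G : Type} [AddGroup G]
variable {A : Type} [Ring A]
variable {M : Type} [AddCommGroup M] [Module A M]

theorem prodSMul_le {S : AddSubgroup A} {N P : AddSubgroup M}
    (h : ∀ a ∈ S, ∀ m ∈ N, a • m ∈ P) : prodSMul S N ≤ P := fun _ hx =>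
  AddSubmonoid.smul_induction_on hx h fun _ _ => P.add_mem

theorem smul_mem_of_mem_mul_neg (𝒜 : G → AddSubgroup A) (ℳ : G → AddSubgroup M)
    [SetLike.GradedSMul 𝒜 ℳ] {g : G} {a : A} (ha : a ∈ 𝒜 g * 𝒜 (-g)) {m : M}
    (hm : m ∈ ℳ g) : a • m ∈ ℳ g := by
  refine AddSubmonoid.mul_induction_on ha (fun s hs t ht => ?_) fun a b ha hb => ?_
  · have htm : t • m ∈ ℳ (-g + g) := SetLike.GradedSMul.smul_mem (A := 𝒜) ht hm
    have hstm : s • t • m ∈ ℳ (g + (-g + g)) := SetLike.GradedSMul.smul_mem (A := 𝒜) hs htm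
    rw [mul_smul]
    simpa using hstm
  · rw [add_smul]
    exact add_mem ha hb

theorem prodSMul_mul_neg_le (𝒜 : G → AddSubgroup A) (ℳ : G → AddSubgroup M)
    [SetLike.GradedSMul 𝒜 ℳ] (g : G) :
    prodSMul (𝒜 g * 𝒜 (-g)) (ℳ g) ≤ ℳ g :=
  prodSMul_le fun _ ha _ hm => smul_mem_of_mem_mul_neg 𝒜 ℳ ha hm

end

theorem DirectSum.decompose_coe_mem_of_mem_iSup {ι M : Type*} [DecidableEq ι] [AddCommGroup M]
    {ℳ N : ι → AddSubgroup M} [DirectSum.Decomposition ℳ] (hN : ∀ i, N i ≤ ℳ i) {y : M}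
    (hy : y ∈ ⨆ i, N i) (j : ι) : (decompose ℳ y j : M) ∈ N j := by
  refine AddSubgroup.iSup_induction N (C := fun y => (decompose ℳ y j : M) ∈ N j) hy
    (fun i z hz => ?_) (by simp) fun a b ha hb => ?_
  · by_cases hij : i = j
    · subst hij
      rwa [decompose_of_mem_same ℳ (hN i hz)]
    · rw [decompose_of_mem_ne ℳ (hN i hz) hij]
      exact zero_mem _
  · rw [decompose_add, add_apply, AddSubgroup.coe_add]
    exact add_mem ha hb

theorem DirectSum.iSup_inf_eq_of_le {ι M : Type*} [DecidableEq ι] [AddCommGroup M]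
    {ℳ N : ι → AddSubgroup M} [DirectSum.Decomposition ℳ] (hN : ∀ i, N i ≤ ℳ i) (j : ι) :
    (⨆ i, N i) ⊓ ℳ j = N j := by
  refine le_antisymm ?_ (le_inf (le_iSup N j) (hN j))
  rintro x ⟨hx, hxj⟩
  simpa [decompose_of_mem_same ℳ hxj] using decompose_coe_mem_of_mem_iSup hN hx j

theorem gradedSubmodule_inf_component
    {G : Type} [AddGroup G] [DecidableEq G]
    {A : Type} [Ring A] (𝒜 : G → AddSubgroup A)
    {M : Type} [AddCommGroup M] [Module A M]
    (ℳ : G → AddSubgroup M) [SetLike.GradedSMul 𝒜 ℳ] [DirectSum.Decomposition ℳ]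
    (h : G) :
    (⨆ g : G, prodSMul (𝒜 g * 𝒜 (-g)) (ℳ g)) ⊓ ℳ h
      = prodSMul (𝒜 h * 𝒜 (-h)) (ℳ h) :=
  DirectSum.iSup_inf_eq_of_le (prodSMul_mul_neg_le 𝒜 ℳ) h
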